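/- arXiv:1701.04746 — 5 statements merged into one kernel-verified Lean document; each statement's English description precedes it below -/
import Mathlib

section
/- For N = 2^n, the Hamming weight of the i-th row of G_N equals 2^{w(i)}, where w(i) is the number of 1s in the binary representation of i. -/
def G2 : Matrix (Fin 2) (Fin 2) (ZMod 2) := !![1,0;1,1]

def Gmat : (n : ℕ) → Matrix (Fin (2^n)) (Fin (2^n)) (ZMod 2)
  | 0 => 1
  | n+1 =>
    Matrix.reindex (finProdFinEquiv.trans (finCongr (by rw [pow_succ, Nat.mul_comm])))
      (finProdFinEquiv.trans (finCongr (by rw [pow_succ, Nat.mul_comm])))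
      (Matrix.kroneckerMap (· * ·) G2 (Gmat n))

def bitRev : ℕ → ℕ → ℕ
  | 0, _ => 0
  | n+1, i => 2^n * (i % 2) + bitRev n (i / 2)

theorem bitRev_lt (n i : ℕ) : bitRev n i < 2^n := by
  induction n generalizing i with
  | zero => simp [bitRev]
  | succ n ih =>
    have h1 : i % 2 < 2 := Nat.mod_lt _ (by norm_num)
    have h2 := ih (i / 2)
    have h3 : 2^n * (i % 2) ≤ 2^n := by
      calc 2^n * (i % 2) ≤ 2^n * 1 := Nat.mul_le_mul_left _ (by omega)
        _ = 2^n := by omega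
    have h4 : 2^(n+1) = 2^n * 2 := pow_succ 2 n
    simp only [bitRev]
    omega

def bitRevFin (n : ℕ) (i : Fin (2^n)) : Fin (2^n) := ⟨bitRev n i.val, bitRev_lt n i.val⟩

def bitRevVec (n : ℕ) (P : Fin (2^n) → Bool) : Fin (2^n) → Bool :=
  fun i => P (bitRevFin n i)

def elemPerm (j k i : ℕ) : ℕ :=
  if i < k ∨ k + 2^(j+1) ≤ i then i
  else if i < k + 2^j then i + 2^j
  else i - 2^j

def elemPermVec (n j k : ℕ) (P : Fin (2^n) → Bool) : Fin (2^n) → Bool :=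
  fun i => P ⟨elemPerm j k i.val % 2^n, Nat.mod_lt _ (Nat.two_pow_pos n)⟩

def ElemValid (n j k : ℕ) : Prop := j + 1 ≤ n ∧ 2^(j+1) ∣ k ∧ k < 2^n

def wt {m : ℕ} (P : Fin m → Bool) : ℕ := (Finset.univ.filter fun i => P i = true).card

def IsRowUnion (n : ℕ) (P : Fin (2^n) → Bool) : Prop :=
  ∃ L : Finset (Fin (2^n)), L.Nonempty ∧ ∀ j, P j = true ↔ ∃ i ∈ L, Gmat n i j = 1

def blockLt (n j k : ℕ) (P : Fin (2^n) → Bool) : Prop :=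
  ∃ t < 2^j,
    (∀ s < t, P ⟨(k+s) % 2^n, Nat.mod_lt _ (Nat.two_pow_pos n)⟩
              = P ⟨(k+2^j+s) % 2^n, Nat.mod_lt _ (Nat.two_pow_pos n)⟩) ∧
    P ⟨(k+t) % 2^n, Nat.mod_lt _ (Nat.two_pow_pos n)⟩ = false ∧
    P ⟨(k+2^j+t) % 2^n, Nat.mod_lt _ (Nat.two_pow_pos n)⟩ = true

instance (n j k : ℕ) (P : Fin (2^n) → Bool) : Decidable (blockLt n j k P) := by
  unfold blockLt; infer_instance

def algPhi (n : ℕ) (P : Fin (2^n) → Bool) : Fin (2^n) → Bool :=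
  (List.range n).foldl (fun Q j =>
    (List.range (2^(n-j-1))).foldl (fun R m =>
      if blockLt n j (m * 2^(j+1)) R then elemPermVec n j (m * 2^(j+1)) R else R) Q) P

def Pplus (n : ℕ) (P : Fin (2^(n+1)) → Bool) : Fin (2^n) → Bool :=
  fun m => P ⟨2*m.val, by have := m.isLt; have h : 2^(n+1) = 2^n*2 := pow_succ 2 n; omega⟩
        || P ⟨2*m.val+1, by have := m.isLt; have h : 2^(n+1) = 2^n*2 := pow_succ 2 n; omega⟩

def Pminus (n : ℕ) (P : Fin (2^(n+1)) → Bool) : Fin (2^n) → Bool :=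
  fun m => P ⟨2*m.val, by have := m.isLt; have h : 2^(n+1) = 2^n*2 := pow_succ 2 n; omega⟩
        && P ⟨2*m.val+1, by have := m.isLt; have h : 2^(n+1) = 2^n*2 := pow_succ 2 n; omega⟩

def eraseMap : (n : ℕ) → (Fin (2^n) → Bool) → Fin (2^n) → Bool
  | 0, P => P
  | n+1, P => fun i =>
      if h : i.val < 2^n then eraseMap n (Pplus n P) ⟨i.val, h⟩
      else eraseMap n (Pminus n P)
        ⟨i.val - 2^n, by have := i.isLt; have h2 : 2^(n+1) = 2^n*2 := pow_succ 2 n; omega⟩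

def lowHalf (n : ℕ) (P : Fin (2^(n+1)) → Bool) : Fin (2^n) → Bool :=
  fun i => P ⟨i.val, by have := i.isLt; have h : 2^(n+1) = 2^n*2 := pow_succ 2 n; omega⟩

def highHalf (n : ℕ) (P : Fin (2^(n+1)) → Bool) : Fin (2^n) → Bool :=
  fun i => P ⟨2^n + i.val, by have := i.isLt; have h : 2^(n+1) = 2^n*2 := pow_succ 2 n; omega⟩

def lexLT {m : ℕ} (A B : Fin m → Bool) : Prop :=
  ∃ k, (∀ i, i < k → A i = B i) ∧ A k = false ∧ B k = true

def PatEquiv (n : ℕ) (P P' : Fin (2^n) → Bool) : Prop :=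
  ∃ L : List (ℕ × ℕ), (∀ p ∈ L, ElemValid n p.1 p.2) ∧
    P' = bitRevVec n (L.foldl (fun Q p => elemPermVec n p.1 p.2 Q) (bitRevVec n P))


lemma dsum_two_mul (m : ℕ) : (Nat.digits 2 (2*m)).sum = (Nat.digits 2 m).sum := by
  rcases Nat.eq_zero_or_pos m with h | h
  · simp [h]
  · rw [Nat.digits_def' (by norm_num : 1 < 2) (by omega)]
    simp [Nat.mul_div_cancel_left _ (by norm_num : 0 < 2), Nat.mul_mod_right]

lemma dsum_two_mul_add_one (m : ℕ) : (Nat.digits 2 (2*m+1)).sum = 1 + (Nat.digits 2 m).sum := by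
  rw [Nat.digits_def' (by norm_num : 1 < 2) (by omega)]
  have h1 : (2*m+1) % 2 = 1 := by omega
  have h2 : (2*m+1) / 2 = m := by omega
  simp [h1, h2]

lemma dsum_split (n a b : ℕ) (ha : a < 2) (hb : b < 2^n) :
    (Nat.digits 2 (2^n*a+b)).sum = a + (Nat.digits 2 b).sum := by
  induction n generalizing b with
  | zero =>
    interval_cases b
    interval_cases a <;> simp
  | succ n ih =>
    have hb2 : b / 2 < 2^n := by
      have : 2^(n+1) = 2^n*2 := pow_succ 2 n
      omega
    have hkey : 2^(n+1)*a + b = 2*(2^n*a + b/2) + b % 2 := by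
      have h2 : 2^(n+1)*a = 2*(2^n*a) := by rw [pow_succ]; ring
      omega
    have hb' : b = 2*(b/2) + b % 2 := by omega
    rcases Nat.mod_two_eq_zero_or_one b with h | h
    · rw [hkey, h, Nat.add_zero, dsum_two_mul, ih _ hb2]
      conv_rhs => rw [hb', h, Nat.add_zero, dsum_two_mul]
    · rw [hkey, h, dsum_two_mul_add_one, ih _ hb2]
      conv_rhs => rw [hb', h, dsum_two_mul_add_one]
      omega

lemma Gmat_succ (n : ℕ) (i j : Fin (2^(n+1))) :
    Gmat (n+1) i j
      = G2 ⟨i.val / 2^n, Nat.div_lt_of_lt_mul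
            (by have := i.isLt; have h := pow_succ 2 n; omega)⟩
          ⟨j.val / 2^n, Nat.div_lt_of_lt_mul
            (by have := j.isLt; have h := pow_succ 2 n; omega)⟩
        * Gmat n ⟨i.val % 2^n, Nat.mod_lt _ (Nat.two_pow_pos n)⟩
            ⟨j.val % 2^n, Nat.mod_lt _ (Nat.two_pow_pos n)⟩ := by
  show Matrix.reindex _ _ _ i j = _
  rw [Matrix.reindex_apply]
  rfl

lemma zmod2_mul_eq_one (x y : ZMod 2) : x * y = 1 ↔ x = 1 ∧ y = 1 := by
  revert x y; decide

lemma G2_row_card : ∀ a : Fin 2,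
    (Finset.univ.filter fun c => G2 a c = 1).card = 2^(a:ℕ) := by decide

/-- the Hamming weight of row i of G_N equals 2^{w(i)}, where w(i)
is the number of ones in the binary representation of i. -/
theorem stmt3 (n : ℕ) (i : Fin (2^n)) :
    (Finset.univ.filter fun j : Fin (2^n) => Gmat n i j = 1).card
      = 2 ^ ((Nat.digits 2 (i : ℕ)).sum) := by
  induction n with
  | zero =>
    have huniv : (Finset.univ.filter fun j : Fin (2^0) => Gmat 0 i j = 1) = Finset.univ := by
      apply Finset.filter_true_of_mem
      intro j _
      have hij : i = j := by
        apply Fin.ext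
        have h1 := i.isLt
        have h2 := j.isLt
        omega
      subst hij
      simp [Gmat, Matrix.one_apply]
    rw [huniv]
    have h0 : (i:ℕ) = 0 := by have := i.isLt; omega
    rw [h0]
    simp
  | succ n ih =>
    have hpow : 2^(n+1) = 2^n*2 := pow_succ 2 n
    have hi := i.isLt
    set a : Fin 2 := ⟨i.val / 2^n, Nat.div_lt_of_lt_mul (by omega)⟩ with ha
    set b : Fin (2^n) := ⟨i.val % 2^n, Nat.mod_lt _ (Nat.two_pow_pos n)⟩ with hb
    have hdecomp : (i : ℕ) = 2^n * a.val + b.val := by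
      simp only [ha, hb]
      exact (Nat.div_add_mod _ _).symm
    have hcard :
        (Finset.univ.filter fun j : Fin (2^(n+1)) => Gmat (n+1) i j = 1).card
          = (Finset.univ.filter fun p : Fin 2 × Fin (2^n) =>
              G2 a p.1 = 1 ∧ Gmat n b p.2 = 1).card := by
      refine Finset.card_bij' (fun j _ =>
          (⟨j.val / 2^n, Nat.div_lt_of_lt_mul (by have := j.isLt; omega)⟩,
           ⟨j.val % 2^n, Nat.mod_lt _ (Nat.two_pow_pos n)⟩))
        (fun p _ => ⟨2^n * p.1.val + p.2.val, by
          have h1 := p.1.isLt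
          have h2 := p.2.isLt
          have h3 : 2^n * p.1.val ≤ 2^n * 1 := Nat.mul_le_mul_left _ (by omega)
          omega⟩) ?_ ?_ ?_ ?_
      · intro j hj
        simp only [Finset.mem_filter, Finset.mem_univ, true_and] at hj ⊢
        rw [Gmat_succ, zmod2_mul_eq_one] at hj
        exact hj
      · intro p hp
        simp only [Finset.mem_filter, Finset.mem_univ, true_and] at hp ⊢
        rw [Gmat_succ, zmod2_mul_eq_one]
        have h1 := p.1.isLt
        have h2 := p.2.isLt
        have hd : (2^n * p.1.val + p.2.val) / 2^n = p.1.val := by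
          rw [Nat.mul_add_div (Nat.two_pow_pos n), Nat.div_eq_of_lt h2, Nat.add_zero]
        have hm : (2^n * p.1.val + p.2.val) % 2^n = p.2.val := by
          rw [Nat.mul_add_mod, Nat.mod_eq_of_lt h2]
        constructor
        · convert hp.1 using 2
          exact Fin.ext hd
        · convert hp.2 using 2
          exact Fin.ext hm
      · intro j _
        apply Fin.ext
        exact Nat.div_add_mod _ _
      · intro p _
        have h1 := p.1.isLt
        have h2 := p.2.isLt
        have hd : (2^n * p.1.val + p.2.val) / 2^n = p.1.val := by
          rw [Nat.mul_add_div (Nat.two_pow_pos n), Nat.div_eq_of_lt h2, Nat.add_zero]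
        have hm : (2^n * p.1.val + p.2.val) % 2^n = p.2.val := by
          rw [Nat.mul_add_mod, Nat.mod_eq_of_lt h2]
        rw [Prod.ext_iff]
        exact ⟨Fin.ext hd, Fin.ext hm⟩
    have hsplit : (Finset.univ.filter fun p : Fin 2 × Fin (2^n) =>
          G2 a p.1 = 1 ∧ Gmat n b p.2 = 1)
        = (Finset.univ.filter fun c => G2 a c = 1) ×ˢ
          (Finset.univ.filter fun d => Gmat n b d = 1) := by
      ext p
      simp [Finset.mem_product]
    rw [hcard, hsplit, Finset.card_product, ih b, hdecomp,
      dsum_split n a.val b.val a.isLt b.isLt, pow_add, G2_row_card]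
end

section
/- For N = 2^n and indices i, k with G_N(k,i) = 1, the support of row i of G_N is contained in the support of row k of G_N (i.e., G_N^{(i)}(j) = 1 implies G_N^{(k)}(j) = 1 for all j). -/
/-! The entries equal to `1` of `G_N` form a transitive relation on the indices, which is the
claim. This holds for `G_2` and for the identity, and survives Kronecker products because over
`ZMod 2` a product is `1` exactly when both factors are. -/

namespace Matrix

variable {ι κ R : Type*}

theorem isTrans_one_apply_eq_one [DecidableEq ι] [Zero R] [One R] [NeZero (1 : R)] :
    IsTrans ι fun a b => (1 : Matrix ι ι R) a b = 1 where
  trans a b c hab hbc := by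
    have eq_of_apply_eq_one {a b : ι} (h : (1 : Matrix ι ι R) a b = 1) : a = b :=
      by_contra fun hne => zero_ne_one' R (by rwa [one_apply_ne hne] at h)
    rwa [eq_of_apply_eq_one hab]

theorem isTrans_reindex_apply_eq_one [One R] {M : Matrix ι ι R} (e : ι ≃ κ)
    (hM : IsTrans ι fun a b => M a b = 1) :
    IsTrans κ fun a b => reindex e e M a b = 1 :=
  IsTrans.comap (r := fun a b => M a b = 1) e.symm

theorem isTrans_kronecker_apply_eq_one [CommMonoid R] [Subsingleton Rˣ]
    {A : Matrix ι ι R} {B : Matrix κ κ R}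
    (hA : IsTrans ι fun a b => A a b = 1) (hB : IsTrans κ fun a b => B a b = 1) :
    IsTrans (ι × κ) fun a b => kroneckerMap (· * ·) A B a b = 1 where
  trans a b c hab hbc := by
    simp only [kroneckerMap_apply, mul_eq_one] at *
    exact ⟨hA.trans _ _ _ hab.1 hbc.1, hB.trans _ _ _ hab.2 hbc.2⟩

end Matrix

open Matrix

theorem isTrans_G2_apply_eq_one : IsTrans (Fin 2) fun a b => G2 a b = 1 where
  trans a b c := by
    fin_cases a <;> fin_cases b <;> fin_cases c <;> simp [G2]

theorem isTrans_Gmat_apply_eq_one (n : ℕ) : IsTrans (Fin (2^n)) fun a b => Gmat n a b = 1 := by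
  induction n with
  | zero => exact isTrans_one_apply_eq_one
  | succ n ih =>
    exact isTrans_reindex_apply_eq_one _ (isTrans_kronecker_apply_eq_one isTrans_G2_apply_eq_one ih)

/-- if G_N(k,i) = 1 then the support of row i is contained in the
support of row k. -/
theorem stmt4 (n : ℕ) (i k : Fin (2^n)) (hki : Gmat n k i = 1) :
    ∀ j : Fin (2^n), Gmat n i j = 1 → Gmat n k j = 1 :=
  fun _ => (isTrans_Gmat_apply_eq_one n).trans _ _ _ hki
end

section
/- Any union of rows of G_N is invariant under every elementary permutation composed with bit-reversal conjugation: if P = ⋁_{i∈L} G_N^{(i)} for some nonempty L ⊆ {0,...,N-1}, then for every elementary permutation φ_{k,j}, B_N(φ_{k,j}(B_N(P))) has the same Hamming weight as P and B_N(P) is invariant under the procedure φ of Algorithm 1; in particular, φ(B_N(P)) = B_N(P) where φ applies each φ_{k,j} only when the left block [P(k),...,P(k+2^j-1)] is lexicographically smaller than the right block [P(k+2^j),...,P(k+2^{j+1}-1)]. -/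
def Submask (x y : ℕ) : Prop := ∀ s, x.testBit s = true → y.testBit s = true

theorem Submask.trans {x y z : ℕ} (hxy : Submask x y) (hyz : Submask y z) : Submask x z :=
  fun s hs => hyz s (hxy s hs)

theorem submask_or_right (x y : ℕ) : Submask x (x ||| y) := fun s hs => by
  simp [Nat.testBit_or, hs]

theorem submask_iff_mod_div (n x y : ℕ) :
    Submask x y ↔ Submask (x % 2^n) (y % 2^n) ∧ Submask (x / 2^n) (y / 2^n) := by
  refine ⟨fun h => ⟨fun s hs => ?_, fun s hs => ?_⟩, fun ⟨hmod, hdiv⟩ s hs => ?_⟩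
  · simp only [Nat.testBit_mod_two_pow, Bool.and_eq_true] at hs ⊢
    exact ⟨hs.1, h s hs.2⟩
  · rw [Nat.testBit_div_two_pow] at hs ⊢
    exact h _ hs
  · rcases lt_or_ge s n with hs' | hs'
    · simpa [Nat.testBit_mod_two_pow, hs'] using
        hmod s (by simp [Nat.testBit_mod_two_pow, hs', hs])
    · have := hdiv (s - n) (by rwa [Nat.testBit_div_two_pow, Nat.sub_add_cancel hs'])
      rwa [Nat.testBit_div_two_pow, Nat.sub_add_cancel hs'] at this

theorem G2_eq_one_iff (a c : Fin 2) : G2 a c = 1 ↔ Submask c a := by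
  fin_cases a <;> fin_cases c <;> simp [G2, Submask]
  exact ⟨0, rfl⟩

theorem Gmat_succ_apply (n : ℕ) (i j : Fin (2^(n+1))) :
    Gmat (n+1) i j =
      G2 ⟨i / 2^n, Nat.div_lt_of_lt_mul (pow_succ 2 n ▸ i.isLt)⟩
          ⟨j / 2^n, Nat.div_lt_of_lt_mul (pow_succ 2 n ▸ j.isLt)⟩ *
        Gmat n ⟨i % 2^n, Nat.mod_lt _ (Nat.two_pow_pos n)⟩
          ⟨j % 2^n, Nat.mod_lt _ (Nat.two_pow_pos n)⟩ :=
  rfl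

theorem Gmat_eq_one_iff (n : ℕ) (i j : Fin (2^n)) : Gmat n i j = 1 ↔ Submask j i := by
  induction n with
  | zero =>
    obtain rfl : i = j := Fin.ext (by omega)
    simp [Gmat, Submask]
  | succ n ih =>
    have zmod_two_mul_eq_one : ∀ x y : ZMod 2, x * y = 1 ↔ x = 1 ∧ y = 1 := by decide
    rw [Gmat_succ_apply, zmod_two_mul_eq_one, G2_eq_one_iff, ih, submask_iff_mod_div n j i,
      and_comm]

theorem testBit_bitRev (n i t : ℕ) :
    (bitRev n i).testBit t = (decide (t < n) && i.testBit (n - 1 - t)) := by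
  induction n generalizing i with
  | zero => simp [bitRev]
  | succ n ih =>
    rw [bitRev, Nat.testBit_two_pow_mul_add _ (bitRev_lt n _)]
    rcases lt_trichotomy t n with h | rfl | h
    · simp [h, ih, Nat.testBit_div_two, show t < n + 1 by omega,
        show n - 1 - t + 1 = n - t by omega]
    · simp [Nat.testBit_zero]
    · have hbit : (i % 2).testBit (t - n) = false :=
        Nat.testBit_lt_two_pow ((Nat.mod_lt i two_pos).trans_le (Nat.le_self_pow (by omega) 2))
      simp [hbit, show ¬ t < n by omega, show ¬ t < n + 1 by omega]

theorem bitRev_bitRev {n i : ℕ} (hi : i < 2^n) : bitRev n (bitRev n i) = i := by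
  refine Nat.eq_of_testBit_eq fun t => ?_
  rcases lt_or_ge t n with h | h
  · simp [testBit_bitRev, h, show n - 1 - (n - 1 - t) = t by omega, show n - 1 - t < n by omega]
  · simp [testBit_bitRev, Nat.not_lt.mpr h,
      Nat.testBit_lt_two_pow (hi.trans_le (Nat.pow_le_pow_right two_pos h))]

theorem Submask.bitRev {x y : ℕ} (h : Submask x y) (n : ℕ) :
    Submask (bitRev n x) (bitRev n y) := by
  intro s hs
  simp only [testBit_bitRev, Bool.and_eq_true] at hs ⊢
  exact ⟨hs.1, h _ hs.2⟩

theorem bitRevFin_involutive (n : ℕ) : Function.Involutive (bitRevFin n) :=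
  fun i => Fin.ext (bitRev_bitRev i.isLt)

theorem elemPerm_involutive (j k : ℕ) : Function.Involutive (elemPerm j k) := by
  intro i
  have hpow : 2^(j+1) = 2 * 2^j := by rw [pow_succ']
  unfold elemPerm
  split_ifs <;> omega

theorem elemPerm_lt {n j k i : ℕ} (hk : k + 2^(j+1) ≤ 2^n) (hi : i < 2^n) :
    elemPerm j k i < 2^n := by
  have hpow : 2^(j+1) = 2 * 2^j := by rw [pow_succ']
  unfold elemPerm
  split_ifs <;> omega

theorem ElemValid.add_two_pow_le {n j k : ℕ} (h : ElemValid n j k) : k + 2^(j+1) ≤ 2^n := by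
  obtain ⟨hjn, hdvd, hk⟩ := h
  have : 2^(j+1) ∣ 2^n - k := Nat.dvd_sub (pow_dvd_pow 2 hjn) hdvd
  have := Nat.le_of_dvd (by omega) this
  omega

def elemPermFin (n j k : ℕ) (i : Fin (2^n)) : Fin (2^n) :=
  ⟨elemPerm j k i % 2^n, Nat.mod_lt _ (Nat.two_pow_pos n)⟩

theorem elemPermFin_involutive {n j k : ℕ} (h : ElemValid n j k) :
    Function.Involutive (elemPermFin n j k) := by
  intro i
  have hlt := elemPerm_lt h.add_two_pow_le i.isLt
  simp only [elemPermFin, Nat.mod_eq_of_lt hlt, elemPerm_involutive j k i, Nat.mod_eq_of_lt i.isLt]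

theorem wt_comp_of_bijective {m : ℕ} (P : Fin m → Bool) {σ : Fin m → Fin m}
    (hσ : Function.Bijective σ) : wt (P ∘ σ) = wt P :=
  Finset.card_equiv (Equiv.ofBijective σ hσ) (by simp)

theorem wt_bitRevVec_elemPermVec_bitRevVec {n j k : ℕ} (h : ElemValid n j k)
    (P : Fin (2^n) → Bool) :
    wt (bitRevVec n (elemPermVec n j k (bitRevVec n P))) = wt P :=
  wt_comp_of_bijective P <| (bitRevFin_involutive n).bijective.comp <|
    (elemPermFin_involutive h).bijective.comp (bitRevFin_involutive n).bijective

def DownClosed (n : ℕ) (Q : Fin (2^n) → Bool) : Prop :=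
  ∀ x y : Fin (2^n), Submask x y → Q y = true → Q x = true

theorem downClosed_of_rowUnion {n : ℕ} {L : Finset (Fin (2^n))} {P : Fin (2^n) → Bool}
    (hP : ∀ j, P j = true ↔ ∃ i ∈ L, Gmat n i j = 1) : DownClosed n P := by
  intro x y hxy hy
  obtain ⟨i, hi, hyi⟩ := (hP y).1 hy
  exact (hP x).2 ⟨i, hi, (Gmat_eq_one_iff n i x).2 (hxy.trans ((Gmat_eq_one_iff n i y).1 hyi))⟩

theorem DownClosed.bitRevVec {n : ℕ} {Q : Fin (2^n) → Bool} (hQ : DownClosed n Q) :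
    DownClosed n (bitRevVec n Q) :=
  fun x y hxy => hQ (bitRevFin n x) (bitRevFin n y) (hxy.bitRev n)

theorem submask_add_add_two_pow {j k t : ℕ} (hk : 2^(j+1) ∣ k) (ht : t < 2^j) :
    Submask (k + t) (k + 2^j + t) := by
  obtain ⟨m, rfl⟩ := hk
  have ht' : t < 2^(j+1) := ht.trans (Nat.pow_lt_pow_right one_lt_two j.lt_succ_self)
  have hright : 2^(j+1) * m + 2^j + t = (2^(j+1) * m + t) ||| 2^j := by
    rw [Nat.two_pow_add_eq_or_of_lt ht', add_assoc, Nat.two_pow_add_eq_or_of_lt (by omega),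
      show 2^j + t = 2^j * 1 + t by ring, Nat.two_pow_add_eq_or_of_lt ht, mul_one, Nat.or_assoc,
      Nat.or_comm (2^j)]
  rw [hright]
  exact submask_or_right _ _

theorem DownClosed.not_blockLt {n j k : ℕ} {Q : Fin (2^n) → Bool} (hQ : DownClosed n Q)
    (hk : 2^(j+1) ∣ k) (hkn : k + 2^(j+1) ≤ 2^n) : ¬ blockLt n j k Q := by
  rintro ⟨t, ht, -, hleft, hright⟩
  have hpow : 2^(j+1) = 2 * 2^j := by rw [pow_succ']
  have hsub : Submask ((k + t) % 2^n) ((k + 2^j + t) % 2^n) := by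
    rw [Nat.mod_eq_of_lt (by omega), Nat.mod_eq_of_lt (by omega)]
    exact submask_add_add_two_pow hk ht
  simp [hQ ⟨_, Nat.mod_lt _ (Nat.two_pow_pos n)⟩ _ hsub hright] at hleft

theorem List.foldl_eq_self_of_forall_mem {α β : Type*} {f : α → β → α} {a : α}
    {l : List β} (h : ∀ b ∈ l, f a b = a) : l.foldl f a = a := by
  induction l with
  | nil => rfl
  | cons b l ih =>
    rw [List.foldl_cons, h b List.mem_cons_self]
    exact ih fun b' hb' => h b' (List.mem_cons_of_mem b hb')

theorem DownClosed.algPhi_eq_self {n : ℕ} {Q : Fin (2^n) → Bool} (hQ : DownClosed n Q) :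
    algPhi n Q = Q := by
  refine List.foldl_eq_self_of_forall_mem fun j hj =>
    List.foldl_eq_self_of_forall_mem fun m hm => ?_
  rw [List.mem_range] at hj hm
  have hkn : m * 2^(j+1) + 2^(j+1) ≤ 2^n := by
    calc m * 2^(j+1) + 2^(j+1) = (m + 1) * 2^(j+1) := by ring
      _ ≤ 2^(n-j-1) * 2^(j+1) := Nat.mul_le_mul_right _ hm
      _ = 2^n := by rw [← pow_add]; congr 1; omega
  rw [if_neg (hQ.not_blockLt (dvd_mul_left _ _) hkn)]

theorem stmt11_general (n : ℕ) (L : Finset (Fin (2^n)))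
    (P : Fin (2^n) → Bool)
    (hP : ∀ j, P j = true ↔ ∃ i ∈ L, Gmat n i j = 1) :
    (∀ j k, ElemValid n j k →
        wt (bitRevVec n (elemPermVec n j k (bitRevVec n P))) = wt P) ∧
    algPhi n (bitRevVec n P) = bitRevVec n P :=
  ⟨fun _ _ h => wt_bitRevVec_elemPermVec_bitRevVec h P,
    (downClosed_of_rowUnion hP).bitRevVec.algPhi_eq_self⟩

/-- a union of rows of G_N has B_N(φ_{k,j}(B_N(P))) of the same
Hamming weight as P for every elementary permutation, and B_N(P) is a fixed
point of the function φ of Algorithm 1. -/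
theorem stmt11 (n : ℕ) (L : Finset (Fin (2^n))) (hL : L.Nonempty)
    (P : Fin (2^n) → Bool)
    (hP : ∀ j, P j = true ↔ ∃ i ∈ L, Gmat n i j = 1) :
    (∀ j k, ElemValid n j k →
        wt (bitRevVec n (elemPermVec n j k (bitRevVec n P))) = wt P) ∧
    algPhi n (bitRevVec n P) = bitRevVec n P :=
  stmt11_general n L P hP
end

section
/- For every puncturing pattern P of length N = 2^n, the erasure pattern E[P] (defined by the recursive kernel rule) is either the zero vector or a union of rows of G_N. -/
def eqv (n : ℕ) : Fin 2 × Fin (2^n) ≃ Fin (2^(n+1)) :=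
  finProdFinEquiv.trans (finCongr (by rw [pow_succ, Nat.mul_comm]))

lemma eqv_val (n : ℕ) (a : Fin 2) (b : Fin (2^n)) :
    (eqv n (a, b)).val = b.val + 2^n * a.val := by
  simp [eqv, finProdFinEquiv]

lemma gmat_succ (n : ℕ) (a a' : Fin 2) (b b' : Fin (2^n)) :
    Gmat (n+1) (eqv n (a, b)) (eqv n (a', b')) = G2 a a' * Gmat n b b' := by
  simp [Gmat, eqv, Matrix.reindex_apply]

lemma gmat_diag : ∀ (n : ℕ) (j : Fin (2^n)), Gmat n j j = 1 := by
  intro n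
  induction n with
  | zero => intro j; simp [Gmat, Matrix.one_apply]
  | succ n ih =>
    intro j
    obtain ⟨⟨a, b⟩, rfl⟩ := (eqv n).surjective j
    rw [gmat_succ]
    have hG : G2 a a = 1 := by fin_cases a <;> simp [G2]
    rw [hG, one_mul, ih]

lemma pplus_mono (n : ℕ) (P Q : Fin (2^(n+1)) → Bool)
    (h : ∀ i, P i = true → Q i = true) :
    ∀ i, Pplus n P i = true → Pplus n Q i = true := by
  intro i hi
  simp only [Pplus, Bool.or_eq_true] at hi ⊢
  rcases hi with hi | hi
  · exact Or.inl (h _ hi)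
  · exact Or.inr (h _ hi)

lemma pminus_mono (n : ℕ) (P Q : Fin (2^(n+1)) → Bool)
    (h : ∀ i, P i = true → Q i = true) :
    ∀ i, Pminus n P i = true → Pminus n Q i = true := by
  intro i hi
  simp only [Pminus, Bool.and_eq_true] at hi ⊢
  exact ⟨h _ hi.1, h _ hi.2⟩

lemma pminus_le_pplus (n : ℕ) (P : Fin (2^(n+1)) → Bool) :
    ∀ i, Pminus n P i = true → Pplus n P i = true := by
  intro i hi
  simp only [Pminus, Bool.and_eq_true] at hi
  simp only [Pplus, Bool.or_eq_true]
  exact Or.inl hi.1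

lemma eraseMap_mono : ∀ (n : ℕ) (P Q : Fin (2^n) → Bool),
    (∀ i, P i = true → Q i = true) →
    ∀ i, eraseMap n P i = true → eraseMap n Q i = true := by
  intro n
  induction n with
  | zero => intro P Q h i hi; exact h i hi
  | succ n ih =>
    intro P Q h i hi
    simp only [eraseMap] at hi ⊢
    by_cases hlt : i.val < 2^n
    · rw [dif_pos hlt] at hi ⊢
      exact ih _ _ (pplus_mono n P Q h) _ hi
    · rw [dif_neg hlt] at hi ⊢
      exact ih _ _ (pminus_mono n P Q h) _ hi

lemma erase_low (n : ℕ) (P : Fin (2^(n+1)) → Bool) (b : Fin (2^n)) :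
    eraseMap (n+1) P (eqv n (0, b)) = eraseMap n (Pplus n P) b := by
  have hv : (eqv n (0, b)).val = b.val := by rw [eqv_val]; simp
  simp only [eraseMap]
  rw [dif_pos (by rw [hv]; exact b.isLt)]
  congr 1
  all_goals first | rfl | exact Fin.ext hv

lemma erase_high (n : ℕ) (P : Fin (2^(n+1)) → Bool) (b : Fin (2^n)) :
    eraseMap (n+1) P (eqv n (1, b)) = eraseMap n (Pminus n P) b := by
  have hv : (eqv n (1, b)).val = b.val + 2^n := by rw [eqv_val]; norm_num
  simp only [eraseMap]
  rw [dif_neg (by omega)]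
  congr 1
  all_goals first
  | rfl
  | exact Fin.ext (show ((eqv n) (1, b)).val - 2^n = b.val by omega)

lemma fin2_cases (a : Fin 2) : a = 0 ∨ a = 1 := by
  rcases a with ⟨(_|_|v), hv⟩
  · exact Or.inl rfl
  · exact Or.inr rfl
  · omega

lemma erase_dc : ∀ (n : ℕ) (P : Fin (2^n) → Bool) (i j : Fin (2^n)),
    Gmat n i j = 1 → eraseMap n P i = true → eraseMap n P j = true := by
  intro n
  induction n with
  | zero =>
    intro P i j _ hi
    have hi1 : i.val < 1 := by simpa using i.isLt
    have hj1 : j.val < 1 := by simpa using j.isLt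
    have : i = j := Fin.ext (by omega)
    rwa [← this]
  | succ n ih =>
    intro P i j hG hi
    obtain ⟨⟨a, b⟩, rfl⟩ := (eqv n).surjective i
    obtain ⟨⟨a', b'⟩, rfl⟩ := (eqv n).surjective j
    rw [gmat_succ] at hG
    rcases fin2_cases a with rfl | rfl <;> rcases fin2_cases a' with rfl | rfl
    · -- a = 0, a' = 0
      rw [show G2 0 0 = 1 from by decide, one_mul] at hG
      rw [erase_low] at hi ⊢
      exact ih _ _ _ hG hi
    · -- a = 0, a' = 1 : impossible
      rw [show G2 0 1 = 0 from by decide, zero_mul] at hG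
      exact absurd hG (by decide)
    · -- a = 1, a' = 0
      rw [show G2 1 0 = 1 from by decide, one_mul] at hG
      rw [erase_high] at hi
      rw [erase_low]
      exact ih _ _ _ hG (eraseMap_mono n _ _ (pminus_le_pplus n P) b hi)
    · -- a = 1, a' = 1
      rw [show G2 1 1 = 1 from by decide, one_mul] at hG
      rw [erase_high] at hi ⊢
      exact ih _ _ _ hG hi

/-- for every puncturing pattern P, the erasure pattern E[P] is
either the zero vector or a union of rows of G_N. -/
theorem stmt17 (n : ℕ) (P : Fin (2^n) → Bool) :
    (∀ j, eraseMap n P j = false) ∨ IsRowUnion n (eraseMap n P) := by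
  by_cases h : ∀ j, eraseMap n P j = false
  · exact Or.inl h
  · right
    push_neg at h
    obtain ⟨j0, hj0⟩ := h
    refine ⟨Finset.univ.filter fun i => eraseMap n P i = true, ?_, ?_⟩
    · exact ⟨j0, by simp [Bool.not_eq_false] at hj0 ⊢; exact hj0⟩
    · intro j
      constructor
      · intro hj
        exact ⟨j, by simp [hj], gmat_diag n j⟩
      · rintro ⟨i, hi, hG⟩
        simp only [Finset.mem_filter, Finset.mem_univ, true_and] at hi
        exact erase_dc n P i j hG hi
end

section
/- The function φ of Algorithm 1 is lexicographically non-decreasing: for every binary vector P of length N = 2^n, P ≤_lex φ(P), and φ(P) is obtainable from P by a sequence of elementary permutations. -/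
def lexLE' {m : ℕ} (A B : Fin m → Bool) : Prop := A = B ∨ lexLT A B

lemma lexLT_trans' {m : ℕ} {A B C : Fin m → Bool} (h1 : lexLT A B) (h2 : lexLT B C) :
    lexLT A C := by
  obtain ⟨k1, hp1, ha1, hb1⟩ := h1
  obtain ⟨k2, hp2, hb2, hc2⟩ := h2
  rcases le_or_gt k1 k2 with h | h
  · refine ⟨k1, fun i hi => (hp1 i hi).trans (hp2 i (lt_of_lt_of_le hi h)), ha1, ?_⟩
    rcases eq_or_lt_of_le h with rfl | h
    · exact hc2
    · rw [← hp2 k1 h]; exact hb1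
  · exact ⟨k2, fun i hi => (hp1 i (hi.trans h)).trans (hp2 i hi),
      by rw [hp1 k2 h]; exact hb2, hc2⟩

lemma lexLE'_trans {m : ℕ} {A B C : Fin m → Bool} (h1 : lexLE' A B) (h2 : lexLE' B C) :
    lexLE' A C := by
  rcases h1 with rfl | h1
  · exact h2
  rcases h2 with rfl | h2
  · exact Or.inr h1
  · exact Or.inr (lexLT_trans' h1 h2)

def Reach (n : ℕ) (P Q : Fin (2^n) → Bool) : Prop :=
  ∃ L : List (ℕ × ℕ), (∀ p ∈ L, ElemValid n p.1 p.2) ∧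
    Q = L.foldl (fun Q p => elemPermVec n p.1 p.2 Q) P

lemma Reach_refl {n : ℕ} (P : Fin (2^n) → Bool) : Reach n P P := ⟨[], by simp, rfl⟩

lemma Reach_trans {n : ℕ} {P Q R : Fin (2^n) → Bool} (h1 : Reach n P Q) (h2 : Reach n Q R) :
    Reach n P R := by
  obtain ⟨L1, hv1, rfl⟩ := h1
  obtain ⟨L2, hv2, rfl⟩ := h2
  refine ⟨L1 ++ L2, ?_, by rw [List.foldl_append]⟩
  intro p hp
  rcases List.mem_append.mp hp with h | h
  · exact hv1 p h
  · exact hv2 p h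

lemma Pmod {n : ℕ} (P : Fin (2^n) → Bool) (a : ℕ) (h : a < 2^n) :
    P ⟨a % 2^n, Nat.mod_lt _ (Nat.two_pow_pos n)⟩ = P ⟨a, h⟩ := by
  congr 1
  exact Fin.ext (Nat.mod_eq_of_lt h)

lemma swap_lexLT {n j k : ℕ} (P : Fin (2^n) → Bool)
    (hk : k + 2^(j+1) ≤ 2^n) (hb : blockLt n j k P) :
    lexLT P (elemPermVec n j k P) := by
  obtain ⟨t, ht, hpre, hf, htt⟩ := hb
  have hj : 2^j + 2^j = 2^(j+1) := by rw [pow_succ]; ring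
  have h1 : k + t < 2^n := by omega
  have h2 : k + 2^j + t < 2^n := by omega
  rw [Pmod P _ h1] at hf
  rw [Pmod P _ h2] at htt
  refine ⟨⟨k+t, h1⟩, ?_, hf, ?_⟩
  · intro i hi
    simp only [Fin.lt_def] at hi
    unfold elemPermVec
    rcases lt_or_ge i.val k with hlt | hge
    · have he : elemPerm j k i.val = i.val := by unfold elemPerm; split_ifs <;> omega
      apply congrArg P
      exact Fin.ext (by simp [he, Nat.mod_eq_of_lt i.isLt])
    · have hs : i.val - k < t := by omega
      have he : elemPerm j k i.val = k + 2^j + (i.val - k) := by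
        unfold elemPerm; split_ifs <;> omega
      have heq := hpre (i.val - k) (by omega)
      rw [Pmod P _ (by omega : k + (i.val - k) < 2^n),
          Pmod P _ (by omega : k + 2^j + (i.val - k) < 2^n)] at heq
      have hL : P i = P ⟨k + (i.val - k), by omega⟩ := by
        apply congrArg P; exact Fin.ext (by simp; omega)
      have hR : P ⟨elemPerm j k i.val % 2^n, Nat.mod_lt _ (Nat.two_pow_pos n)⟩
          = P ⟨k + 2^j + (i.val - k), by omega⟩ := by
        apply congrArg P
        exact Fin.ext (by simp [he, Nat.mod_eq_of_lt (by omega : k + 2^j + (i.val - k) < 2^n)])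
      rw [hL, hR, heq]
  · unfold elemPermVec
    have he : elemPerm j k (k+t) = k + 2^j + t := by unfold elemPerm; split_ifs <;> omega
    simp only [he]
    rw [Pmod P _ h2]
    exact htt

lemma foldl_rel {n : ℕ} {α : Type} (f : (Fin (2^n) → Bool) → α → (Fin (2^n) → Bool))
    (l : List α) (Q : Fin (2^n) → Bool)
    (h : ∀ Q a, a ∈ l → Reach n Q (f Q a) ∧ lexLE' Q (f Q a)) :
    Reach n Q (l.foldl f Q) ∧ lexLE' Q (l.foldl f Q) := by
  induction l generalizing Q with
  | nil => exact ⟨Reach_refl Q, Or.inl rfl⟩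
  | cons a l ih =>
    have h1 := h Q a (by simp)
    have h2 := ih (f Q a) (fun Q a ha => h Q a (by simp [ha]))
    rw [List.foldl_cons]
    exact ⟨Reach_trans h1.1 h2.1, lexLE'_trans h1.2 h2.2⟩

/-- the function φ of Algorithm 1 is lexicographically
non-decreasing, and φ(P) is obtained from P by a sequence of elementary
permutations. -/
theorem stmt18 (n : ℕ) (P : Fin (2^n) → Bool) :
    (algPhi n P = P ∨ lexLT P (algPhi n P)) ∧
    (∃ L : List (ℕ × ℕ), (∀ p ∈ L, ElemValid n p.1 p.2) ∧
        algPhi n P = L.foldl (fun Q p => elemPermVec n p.1 p.2 Q) P) := by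
  have main : Reach n P (algPhi n P) ∧ lexLE' P (algPhi n P) := by
    unfold algPhi
    apply foldl_rel
    intro Q j hj
    rw [List.mem_range] at hj
    apply foldl_rel
    intro R m hm
    rw [List.mem_range] at hm
    set k := m * 2^(j+1) with hkdef
    have hpow : 2^(n-j-1) * 2^(j+1) = 2^n := by
      rw [← pow_add]; congr 1; omega
    have hk : k + 2^(j+1) ≤ 2^n := by
      have : (m+1) * 2^(j+1) ≤ 2^(n-j-1) * 2^(j+1) := Nat.mul_le_mul_right _ (by omega)
      rw [hpow] at this
      calc k + 2^(j+1) = (m+1) * 2^(j+1) := by ring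
        _ ≤ 2^n := this
    by_cases hb : blockLt n j k R
    · simp only [hb, if_true]
      refine ⟨⟨[(j, k)], ?_, rfl⟩, Or.inr (swap_lexLT R hk hb)⟩
      intro p hp
      simp at hp
      subst hp
      refine ⟨by omega, ⟨m, by ring⟩, by have := Nat.two_pow_pos (j+1); omega⟩
    · simp only [hb, if_false]
      exact ⟨Reach_refl R, Or.inl rfl⟩
  obtain ⟨⟨L, hv, hL⟩, hle⟩ := main
  refine ⟨?_, ⟨L, hv, hL⟩⟩
  rcases hle with h | h
  · exact Or.inl h.symm
  · exact Or.inr h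
end
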